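/- arXiv:2302.05409 — 5 statements merged into one kernel-verified Lean document; each statement's English description precedes it below -/
import Mathlib

section
/- Let σ be exponentially distributed with rate r and independent of a strictly positive random variable τ. Define T so that E[T] satisfies the renewal identity for search under exponential resetting; then the mean first passage time with resetting satisfies E[T] = (1 − p)/(r p) where p = P(τ < σ) = E[e^{−rτ}], provided p > 0. -/
/-!
Ties `σ = τ` are null because `σ` has a density, so `P(σ < τ) = 1 - p`. The conditioned laws give
`E[σ⁻] = E[σ; σ < τ] / (1 - p)` and `E[τ⁻] = E[τ; τ < σ] / p`, and Wald's identity with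
`E[R] = (1 - p) / p` turns `E[T]` into `(E[σ; σ < τ] + E[τ; τ < σ]) / p = E[min σ τ] / p`.
Conditioning on `τ = y` and using the layer-cake formula,
`E[min σ y] = ∫₀^y e^{-rt} dt = P(σ ≤ y) / r`, hence `E[min σ τ] = P(σ ≤ τ) / r = (1 - p) / r`.
-/

open MeasureTheory ProbabilityTheory Real Set
open scoped ENNReal

section

variable {Ω : Type*} {mΩ : MeasurableSpace Ω} {μ : Measure Ω}

section Independence

variable {β γ : Type*} {mβ : MeasurableSpace β} {mγ : MeasurableSpace γ} [IsFiniteMeasure μ]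
  {X : Ω → β} {Y : Ω → γ}

theorem ProbabilityTheory.IndepFun.lintegral_comp_eq_lintegral_lintegral (h : IndepFun X Y μ)
    (hX : Measurable X) (hY : Measurable Y) {f : β × γ → ℝ≥0∞} (hf : Measurable f) :
    ∫⁻ ω, f (X ω, Y ω) ∂μ = ∫⁻ ω, ∫⁻ ω', f (X ω, Y ω') ∂μ ∂μ := by
  rw [← lintegral_map hf (hX.prodMk hY),
    (indepFun_iff_map_prod_eq_prod_map_map hX.aemeasurable hY.aemeasurable).1 h,
    lintegral_prod _ hf.aemeasurable, lintegral_map _ hX]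
  · exact lintegral_congr fun ω => lintegral_map (hf.comp measurable_prodMk_left) hY
  · exact hf.lintegral_prod_right'

theorem ProbabilityTheory.IndepFun.measure_mem_eq_lintegral (h : IndepFun X Y μ)
    (hX : Measurable X) (hY : Measurable Y) {s : Set (β × γ)} (hs : MeasurableSet s) :
    μ {ω | (X ω, Y ω) ∈ s} = ∫⁻ ω, μ {ω' | (X ω, Y ω') ∈ s} ∂μ := by
  have hZ {Z : Ω → β × γ} (hZ : Measurable Z) :
      μ {ω | Z ω ∈ s} = ∫⁻ ω, s.indicator 1 (Z ω) ∂μ :=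
    (lintegral_indicator_one (hZ hs)).symm
  rw [hZ (hX.prodMk hY),
    h.lintegral_comp_eq_lintegral_lintegral hX hY (measurable_one.indicator hs)]
  exact lintegral_congr fun ω => (hZ (measurable_const.prodMk hY)).symm

theorem ProbabilityTheory.IndepFun.measure_eq_eq_zero {X Y : Ω → ℝ} (h : IndepFun X Y μ)
    (hX : Measurable X) (hY : Measurable Y) [NullSingletonClass (μ.map Y)] :
    μ {ω | X ω = Y ω} = 0 := by
  have hdiag := h.measure_mem_eq_lintegral hX hY (measurableSet_diagonal (α := ℝ))
  simp only [mem_diagonal_iff] at hdiag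
  have hnull (x : ℝ) : μ {ω' | x = Y ω'} = 0 := by
    rw [← measure_singleton (μ := μ.map Y) x, Measure.map_apply hY (measurableSet_singleton x)]
    simp only [preimage, mem_singleton_iff, eq_comm]
  simp only [hdiag, hnull, lintegral_zero]

end Independence

theorem lintegral_Ioo_ofReal_exp_neg_mul {r : ℝ} (hr : 0 < r) {y : ℝ} (hy : 0 ≤ y) :
    ∫⁻ t in Ioo 0 y, ENNReal.ofReal (exp (-r * t)) =
      ENNReal.ofReal ((1 - exp (-r * y)) / r) := by
  have hint : ∫ t in (0)..y, exp (-r * t) = (1 - exp (-r * y)) / r := by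
    have := intervalIntegral.integral_comp_mul_left (a := 0) (b := y) exp (neg_ne_zero.2 hr.ne')
    simp only [mul_zero, integral_exp, exp_zero, smul_eq_mul] at this
    rw [this]
    field_simp
    ring
  rw [← ofReal_integral_eq_lintegral_ofReal, integral_Ioc_eq_integral_Ioo.symm,
    ← intervalIntegral.integral_of_le hy, hint]
  · exact (continuous_exp.comp (continuous_const.mul continuous_id)).integrableOn_Icc.mono_set
      Ioo_subset_Icc_self
  · exact Filter.Eventually.of_forall fun t => (exp_pos _).le

theorem lintegral_ofReal_min_eq_add {X Y : Ω → ℝ} (hX : Measurable X) (hY : Measurable Y) :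
    ∫⁻ ω, ENNReal.ofReal (min (X ω) (Y ω)) ∂μ =
      ∫⁻ ω in {ω | X ω ≤ Y ω}, ENNReal.ofReal (X ω) ∂μ +
        ∫⁻ ω in {ω | Y ω < X ω}, ENNReal.ofReal (Y ω) ∂μ := by
  have hs : MeasurableSet {ω | X ω ≤ Y ω} := measurableSet_le hX hY
  rw [← lintegral_add_compl _ hs, compl_ofPred]
  simp_rw [not_le]
  congr 1
  · exact setLIntegral_congr_fun hs fun ω h => by rw [min_eq_left h]
  · exact setLIntegral_congr_fun (measurableSet_lt hY hX) fun ω h => by rw [min_eq_right h.le]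

def HasExponentialTail (X : Ω → ℝ) (r : ℝ) (μ : Measure Ω) : Prop :=
  ∀ t, 0 ≤ t → μ {ω | t < X ω} = ENNReal.ofReal (exp (-r * t))

namespace HasExponentialTail

variable [IsProbabilityMeasure μ] {r : ℝ} {X Y : Ω → ℝ}

theorem measure_le (hX : HasExponentialTail X r μ) (hXm : Measurable X) {t : ℝ} (ht : 0 ≤ t) :
    μ {ω | X ω ≤ t} = ENNReal.ofReal (1 - exp (-r * t)) := by
  rw [ENNReal.ofReal_sub _ (exp_pos _).le, ENNReal.ofReal_one, ← hX t ht,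
    ← prob_compl_eq_one_sub (measurableSet_lt measurable_const hXm)]
  simp only [compl_ofPred, not_lt]

theorem ae_pos (hX : HasExponentialTail X r μ) (hXm : Measurable X) : ∀ᵐ ω ∂μ, 0 < X ω := by
  have hnull := hX.measure_le hXm le_rfl
  rw [mul_zero, exp_zero, sub_self, ENNReal.ofReal_zero] at hnull
  filter_upwards [measure_eq_zero_iff_ae_notMem.1 hnull] with ω hω using not_le.1 hω

theorem map_eq_expMeasure (hX : HasExponentialTail X r μ) (hr : 0 < r) (hXm : Measurable X) :
    μ.map X = expMeasure r := by
  have := isProbabilityMeasure_expMeasure hr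
  refine Measure.ext_of_Iic _ _ fun a => ?_
  rw [← ofReal_cdf (expMeasure r), cdf_expMeasure_eq hr, Measure.map_apply hXm measurableSet_Iic]
  split_ifs with ha
  · rw [← neg_mul]
    exact hX.measure_le hXm ha
  · rw [ENNReal.ofReal_zero, measure_eq_zero_iff_ae_notMem]
    filter_upwards [hX.ae_pos hXm] with ω hω
    exact fun h : X ω ≤ a => ha (hω.trans_le h).le

theorem lintegral_ofReal_min_const (hX : HasExponentialTail X r μ) (hr : 0 < r)
    (hXm : Measurable X) (y : ℝ) :
    ∫⁻ ω, ENNReal.ofReal (min (X ω) y) ∂μ = ENNReal.ofReal r⁻¹ * μ {ω | X ω ≤ y} := by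
  have hpos := hX.ae_pos hXm
  rcases lt_or_ge y 0 with hy | hy
  · have hnull : μ {ω | X ω ≤ y} = 0 := by
      rw [measure_eq_zero_iff_ae_notMem]
      filter_upwards [hpos] with ω hω using fun h : X ω ≤ y => (hω.trans_le h).not_ge hy.le
    rw [hnull, mul_zero]
    simp [ENNReal.ofReal_of_nonpos, hy.le]
  have htail_min : ∀ t ∈ Ioi (0 : ℝ), μ {ω | t < min (X ω) y} =
      (Iio y).indicator (fun t => ENNReal.ofReal (exp (-r * t))) t := by
    intro t ht
    by_cases hty : t < y
    · simp only [lt_min_iff, hty, and_true, indicator_of_mem (mem_Iio.2 hty)]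
      exact hX t ht.le
    · simp only [lt_min_iff, hty, and_false, ofPred_false, measure_empty,
        indicator_of_notMem (notMem_Iio.2 (not_lt.1 hty))]
  have hmin_nonneg : 0 ≤ᵐ[μ] fun ω => min (X ω) y := by
    filter_upwards [hpos] with ω hω using le_min hω.le hy
  rw [lintegral_eq_lintegral_meas_lt μ hmin_nonneg (hXm.min measurable_const).aemeasurable,
    setLIntegral_congr_fun measurableSet_Ioi htail_min, lintegral_indicator measurableSet_Iio,
    Measure.restrict_restrict measurableSet_Iio, Iio_inter_Ioi,
    lintegral_Ioo_ofReal_exp_neg_mul hr hy, hX.measure_le hXm hy,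
    ← ENNReal.ofReal_mul (inv_nonneg.2 hr.le), inv_mul_eq_div]

theorem lintegral_ofReal_min (hX : HasExponentialTail X r μ) (hr : 0 < r) (hXm : Measurable X)
    (hYm : Measurable Y) (hXY : IndepFun X Y μ) :
    ∫⁻ ω, ENNReal.ofReal (min (X ω) (Y ω)) ∂μ = ENNReal.ofReal r⁻¹ * μ {ω | X ω ≤ Y ω} := by
  have hmin := hXY.symm.lintegral_comp_eq_lintegral_lintegral hYm hXm
    (f := fun z => ENNReal.ofReal (min z.2 z.1))
    (ENNReal.measurable_ofReal.comp (measurable_snd.min measurable_fst))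
  have hle := hXY.symm.measure_mem_eq_lintegral hYm hXm
    (measurableSet_le measurable_snd measurable_fst)
  simp only [mem_ofPred_eq] at hmin hle
  simp_rw [hmin, hX.lintegral_ofReal_min_const hr hXm,
    lintegral_const_mul' _ _ ENNReal.ofReal_ne_top, hle]

theorem setOf_lt_ae_eq_setOf_le (hX : HasExponentialTail X r μ) (hr : 0 < r)
    (hXm : Measurable X) (hYm : Measurable Y) (hXY : IndepFun X Y μ) :
    {ω | X ω < Y ω} =ᵐ[μ] {ω | X ω ≤ Y ω} := by
  have : NullSingletonClass (μ.map X) := by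
    rw [hX.map_eq_expMeasure hr hXm]
    exact nullSingletonClass_withDensity _
  have hties : μ {ω | Y ω = X ω} = 0 := hXY.symm.measure_eq_eq_zero hYm hXm
  filter_upwards [measure_eq_zero_iff_ae_notMem.1 hties] with ω hω
  exact propext ⟨le_of_lt, fun hle => lt_of_le_of_ne hle (Ne.symm hω)⟩

theorem setLIntegral_lt_add_setLIntegral_gt (hX : HasExponentialTail X r μ) (hr : 0 < r)
    (hXm : Measurable X) (hYm : Measurable Y) (hXY : IndepFun X Y μ) :
    ∫⁻ ω in {ω | X ω < Y ω}, ENNReal.ofReal (X ω) ∂μ +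
        ∫⁻ ω in {ω | Y ω < X ω}, ENNReal.ofReal (Y ω) ∂μ =
      ENNReal.ofReal r⁻¹ * μ {ω | X ω < Y ω} := by
  have hlt_le := hX.setOf_lt_ae_eq_setOf_le hr hXm hYm hXY
  rw [setLIntegral_congr hlt_le, measure_congr hlt_le, ← lintegral_ofReal_min_eq_add hXm hYm,
    hX.lintegral_ofReal_min hr hXm hYm hXY]

end HasExponentialTail

section Conditioning

theorem exists_measure_lt_ne_zero [IsProbabilityMeasure μ] (X : Ω → ℝ) :
    ∃ t, μ {ω | t < X ω} ≠ 0 := by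
  by_contra! h
  have hall : ∀ᵐ ω ∂μ, ∀ n : ℕ, ¬ -(n : ℝ) < X ω :=
    ae_all_iff.2 fun n => measure_eq_zero_iff_ae_notMem.1 (h _)
  obtain ⟨ω, hω⟩ := hall.exists
  obtain ⟨n, hn⟩ := exists_nat_gt (-X ω)
  exact hω n (by linarith)

theorem identDistrib_of_measure_lt_eq [IsProbabilityMeasure μ] {Ω' : Type*}
    {mΩ' : MeasurableSpace Ω'} {ν : Measure Ω'} [IsProbabilityMeasure ν] {X : Ω → ℝ}
    {Y : Ω' → ℝ} (hX : Measurable X) (hY : Measurable Y)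
    (h : ∀ t, μ {ω | t < X ω} = ν {ω | t < Y ω}) : IdentDistrib X Y μ ν := by
  refine ⟨hX.aemeasurable, hY.aemeasurable, Measure.ext_of_Iic _ _ fun t => ?_⟩
  have := Measure.isProbabilityMeasure_map (μ := μ) hX.aemeasurable
  have := Measure.isProbabilityMeasure_map (μ := ν) hY.aemeasurable
  rw [← compl_Ioi, prob_compl_eq_one_sub measurableSet_Ioi, prob_compl_eq_one_sub measurableSet_Ioi,
    Measure.map_apply hX measurableSet_Ioi, Measure.map_apply hY measurableSet_Ioi]
  exact congrArg (1 - ·) (h t)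

variable {s : Set Ω} {X Y : Ω → ℝ}

/-- With `μ s = 0` the right-hand side would vanish for every `t` (as `0 / 0 = 0` in `ℝ≥0∞`). -/
theorem measure_ne_zero_of_measure_lt_eq_div [IsProbabilityMeasure μ]
    (h : ∀ t, μ {ω | t < Y ω} = μ ({ω | t < X ω} ∩ s) / μ s) : μ s ≠ 0 := by
  obtain ⟨t, ht⟩ := exists_measure_lt_ne_zero (μ := μ) Y
  intro hs
  rw [h t, measure_mono_null inter_subset_right hs, ENNReal.zero_div] at ht
  exact ht rfl

theorem identDistrib_cond_of_measure_lt_eq_div [IsProbabilityMeasure μ] (hs : MeasurableSet s)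
    (hX : Measurable X) (hY : Measurable Y)
    (h : ∀ t, μ {ω | t < Y ω} = μ ({ω | t < X ω} ∩ s) / μ s) : IdentDistrib Y X μ μ[|s] := by
  have := cond_isProbabilityMeasure (μ := μ) (measure_ne_zero_of_measure_lt_eq_div h)
  refine identDistrib_of_measure_lt_eq hY hX fun t => ?_
  rw [h t, cond_apply hs, inter_comm, ENNReal.div_eq_inv_mul]

theorem ProbabilityTheory.IdentDistrib.lintegral_ofReal_eq_of_cond
    (h : IdentDistrib Y X μ μ[|s]) :
    ∫⁻ ω, ENNReal.ofReal (Y ω) ∂μ = (μ s)⁻¹ * ∫⁻ ω in s, ENNReal.ofReal (X ω) ∂μ := by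
  calc ∫⁻ ω, ENNReal.ofReal (Y ω) ∂μ = ∫⁻ ω, ENNReal.ofReal (X ω) ∂μ[|s] :=
        (h.comp ENNReal.measurable_ofReal).lintegral_eq
    _ = _ := by rw [cond, lintegral_smul_measure, smul_eq_mul]

theorem ProbabilityTheory.IdentDistrib.ae_nonneg_of_cond (h : IdentDistrib Y X μ μ[|s])
    (hX : 0 ≤ᵐ[μ] X) : 0 ≤ᵐ[μ] Y :=
  h.symm.ae_mem_snd measurableSet_Ici (cond_absolutelyContinuous.ae_le hX)

end Conditioning

section RandomSum

variable {X : ℕ → Ω → ℝ≥0∞} {R : Ω → ℕ}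

theorem sum_Icc_eq_tsum_indicator (f : ℕ → ℝ≥0∞) (k : ℕ) :
    ∑ n ∈ Finset.Icc 1 k, f n = ∑' n, (Iio k).indicator (fun n => f (n + 1)) n := by
  rw [← Finset.coe_range, ← sum_eq_tsum_indicator, Finset.range_eq_Ico, Finset.sum_Ico_add',
    zero_add, Finset.Ico_add_one_right_eq_Icc]

theorem lintegral_sum_Icc_eq_tsum (hX : ∀ n, Measurable (X n)) (hR : Measurable R) :
    ∫⁻ ω, ∑ n ∈ Finset.Icc 1 (R ω), X n ω ∂μ =
      ∑' n, ∫⁻ ω in {ω | n < R ω}, X (n + 1) ω ∂μ := by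
  have hmeas (n : ℕ) : MeasurableSet {ω | n < R ω} := hR (measurableSet_Ioi (a := n))
  calc ∫⁻ ω, ∑ n ∈ Finset.Icc 1 (R ω), X n ω ∂μ
      = ∫⁻ ω, ∑' n, {ω | n < R ω}.indicator (X (n + 1)) ω ∂μ :=
        lintegral_congr fun ω => sum_Icc_eq_tsum_indicator (X · ω) (R ω)
    _ = ∑' n, ∫⁻ ω in {ω | n < R ω}, X (n + 1) ω ∂μ := by
        rw [lintegral_tsum fun n => ((hX _).indicator (hmeas n)).aemeasurable]
        simp_rw [lintegral_indicator (hmeas _)]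

theorem lintegral_natCast_eq_tsum_measure_lt (hR : Measurable R) :
    ∫⁻ ω, (R ω : ℝ≥0∞) ∂μ = ∑' n, μ {ω | n < R ω} := by
  simpa using lintegral_sum_Icc_eq_tsum (μ := μ) (X := fun _ _ => 1) (fun _ => measurable_const) hR

theorem lintegral_sum_Icc_eq_lintegral_mul (hX : ∀ n, Measurable (X n)) (hR : Measurable R)
    (hind : ∀ n, IndepFun R (X n) μ) {m : ℝ≥0∞} (hm : ∀ n, ∫⁻ ω, X n ω ∂μ = m) :
    ∫⁻ ω, ∑ n ∈ Finset.Icc 1 (R ω), X n ω ∂μ = (∫⁻ ω, (R ω : ℝ≥0∞) ∂μ) * m := by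
  have hterm (n : ℕ) : ∫⁻ ω in {ω | n < R ω}, X (n + 1) ω ∂μ = μ {ω | n < R ω} * m := by
    have hs : MeasurableSet {ω | n < R ω} := hR measurableSet_Ioi
    have hf : Measurable ((Ioi n).indicator (1 : ℕ → ℝ≥0∞) ∘ R) :=
      (measurable_one.indicator measurableSet_Ioi).comp hR
    have hind' := (hind (n + 1)).comp
      (measurable_one.indicator (f := (1 : ℕ → ℝ≥0∞)) (measurableSet_Ioi (a := n))) measurable_id
    calc ∫⁻ ω in {ω | n < R ω}, X (n + 1) ω ∂μ
        = ∫⁻ ω, ((Ioi n).indicator (1 : ℕ → ℝ≥0∞) ∘ R * id ∘ X (n + 1)) ω ∂μ := by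
          rw [← lintegral_indicator hs]
          congr 1
          ext ω
          simp [indicator_apply]
      _ = (∫⁻ ω, ((Ioi n).indicator (1 : ℕ → ℝ≥0∞) ∘ R) ω ∂μ) * ∫⁻ ω, X (n + 1) ω ∂μ :=
          lintegral_mul_eq_lintegral_mul_lintegral_of_indepFun'' hf.aemeasurable
            (hX _).aemeasurable hind'
      _ = μ {ω | n < R ω} * m := by
          rw [← lintegral_indicator_one hs, hm]
          congr 2
  rw [lintegral_sum_Icc_eq_tsum hX hR, lintegral_natCast_eq_tsum_measure_lt hR,
    ← ENNReal.tsum_mul_right]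
  exact tsum_congr hterm

theorem lintegral_natCast_eq_of_measure_eq_geometric (hR : Measurable R) {p : ℝ} (hp0 : 0 < p)
    (hp1 : p ≤ 1) (hlaw : ∀ n, μ {ω | R ω = n} = ENNReal.ofReal ((1 - p) ^ n * p)) :
    ∫⁻ ω, (R ω : ℝ≥0∞) ∂μ = ENNReal.ofReal ((1 - p) / p) := by
  have hgeom : HasSum (fun n : ℕ => n * ((1 - p) ^ n * p)) ((1 - p) / p) := by
    have h := (hasSum_coe_mul_geometric_of_norm_lt_one (𝕜 := ℝ) (r := 1 - p)
      (by rw [Real.norm_eq_abs, abs_lt]; constructor <;> linarith)).mul_right p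
    have e : (1 - p) / (1 - (1 - p)) ^ 2 * p = (1 - p) / p := by
      rw [sub_sub_cancel]
      field_simp
    simpa only [mul_assoc, e] using h
  rw [← lintegral_map (f := fun n : ℕ => (n : ℝ≥0∞)) (measurable_of_countable _) hR,
    lintegral_countable', hgeom.tsum_eq.symm, ENNReal.ofReal_tsum_of_nonneg _ hgeom.summable]
  · refine tsum_congr fun n => ?_
    rw [Measure.map_apply hR (measurableSet_singleton n), ENNReal.ofReal_mul n.cast_nonneg,
      ENNReal.ofReal_natCast, ← hlaw n]
    rfl
  · intro n
    have : 0 ≤ 1 - p := by linarith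
    positivity

theorem integral_sum_Icc_add_eq {Y : ℕ → Ω → ℝ} {Z : Ω → ℝ} (hY : ∀ n, Measurable (Y n))
    (hZ : Measurable Z) (hR : Measurable R) (hY0 : ∀ n, 0 ≤ᵐ[μ] Y n) (hZ0 : 0 ≤ᵐ[μ] Z)
    (hind : ∀ n, IndepFun R (Y n) μ) {m : ℝ≥0∞}
    (hm : ∀ n, ∫⁻ ω, ENNReal.ofReal (Y n ω) ∂μ = m) :
    ∫ ω, (∑ n ∈ Finset.Icc 1 (R ω), Y n ω) + Z ω ∂μ =
      ((∫⁻ ω, (R ω : ℝ≥0∞) ∂μ) * m + ∫⁻ ω, ENNReal.ofReal (Z ω) ∂μ).toReal := by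
  have hS : Measurable fun ω => ∑ n ∈ Finset.Icc 1 (R ω), Y n ω :=
    (measurable_from_prod_countable_left (f := fun x : Ω × ℕ => ∑ n ∈ Finset.Icc 1 x.2, Y n x.1)
      fun k => Finset.measurable_sum (Finset.Icc 1 k) fun n _ => hY n).comp
      (measurable_id.prodMk hR)
  have hae : ∀ᵐ ω ∂μ, (∀ n, 0 ≤ Y n ω) ∧ 0 ≤ Z ω := (ae_all_iff.2 hY0).and hZ0
  have hsum_nonneg : 0 ≤ᵐ[μ] fun ω => (∑ n ∈ Finset.Icc 1 (R ω), Y n ω) + Z ω := by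
    filter_upwards [hae] with ω hω
    exact add_nonneg (Finset.sum_nonneg fun n _ => hω.1 n) hω.2
  rw [integral_eq_lintegral_of_nonneg_ae hsum_nonneg (hS.add hZ).aestronglyMeasurable,
    ← lintegral_sum_Icc_eq_lintegral_mul (fun n => (hY n).ennreal_ofReal) hR
      (fun n => (hind n).comp measurable_id ENNReal.measurable_ofReal) hm,
    ← lintegral_add_right _ hZ.ennreal_ofReal]
  congr 1
  refine lintegral_congr_ae ?_
  filter_upwards [hae] with ω hω
  rw [ENNReal.ofReal_add (Finset.sum_nonneg fun n _ => hω.1 n) hω.2,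
    ENNReal.ofReal_sum_of_nonneg fun n _ => hω.1 n]

end RandomSum

end

theorem mean_fpt_exponential_resetting_general
    {Ω : Type*} [MeasureSpace Ω] [IsProbabilityMeasure (ℙ : Measure Ω)]
    (r : ℝ) (hr : 0 < r)
    (τ σ : Ω → ℝ) (hτm : Measurable τ) (hσm : Measurable σ)
    (hτpos : ℙ {ω | τ ω ≤ 0} = 0)
    (hστ : IndepFun σ τ ℙ)
    -- σ is exponentially distributed with rate r
    (hσexp : ∀ t : ℝ, 0 ≤ t → ℙ {ω | t < σ ω} = ENNReal.ofReal (Real.exp (-r * t)))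
    (p : ℝ) (hp : p = (ℙ {ω | τ ω < σ ω}).toReal) (hp0 : 0 < p)
    -- the components of T, on the same space
    (R : Ω → ℕ) (σm : ℕ → Ω → ℝ) (τm : Ω → ℝ)
    (hRm : Measurable R) (hσmm : ∀ n, Measurable (σm n)) (hτmm : Measurable τm)
    (hRlaw : ∀ n : ℕ, ℙ {ω | R ω = n} = ENNReal.ofReal ((1 - p) ^ n * p))
    (hσmlaw : ∀ n, ∀ t : ℝ, ℙ {ω | t < σm n ω} =
      ℙ {ω | t < σ ω ∧ σ ω < τ ω} / ℙ {ω | σ ω < τ ω})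
    (hτmlaw : ∀ t : ℝ, ℙ {ω | t < τm ω} =
      ℙ {ω | t < τ ω ∧ τ ω < σ ω} / ℙ {ω | τ ω < σ ω})
    (hRind : IndepFun R (fun ω => fun n => σm n ω) ℙ)
    (T : Ω → ℝ) (hT : ∀ ω, T ω = (∑ n ∈ Finset.Icc 1 (R ω), σm n ω) + τm ω) :
    ∫ ω, T ω ∂ℙ = (1 - p) / (r * p) := by
  have hσ : HasExponentialTail σ r ℙ := hσexp
  have hpe : ℙ {ω | τ ω < σ ω} = ENNReal.ofReal p := by
    rw [hp, ENNReal.ofReal_toReal (measure_ne_top _ _)]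
  have hq : ℙ {ω | σ ω < τ ω} = ENNReal.ofReal (1 - p) := by
    simp_rw [measure_congr (hσ.setOf_lt_ae_eq_setOf_le hr hσm hτm hστ), ← not_lt,
      ← compl_ofPred, prob_compl_eq_one_sub (measurableSet_lt hτm hσm), hpe,
      ENNReal.ofReal_sub 1 hp0.le, ENNReal.ofReal_one]
  have hp1 : 0 < 1 - p := ENNReal.ofReal_pos.1
    (hq ▸ pos_iff_ne_zero.2 (measure_ne_zero_of_measure_lt_eq_div (hσmlaw 0)))
  have hσcond (n : ℕ) : IdentDistrib (σm n) σ ℙ ℙ[|{ω | σ ω < τ ω}] :=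
    identDistrib_cond_of_measure_lt_eq_div (measurableSet_lt hσm hτm) hσm (hσmm n) (hσmlaw n)
  have hτcond : IdentDistrib τm τ ℙ ℙ[|{ω | τ ω < σ ω}] :=
    identDistrib_cond_of_measure_lt_eq_div (measurableSet_lt hτm hσm) hτm hτmm hτmlaw
  have hτ0 : 0 ≤ᵐ[ℙ] τ :=
    (measure_eq_zero_iff_ae_notMem.1 hτpos).mono fun _ h => (not_le.1 h).le
  rw [funext hT, integral_sum_Icc_add_eq hσmm hτmm hRm
      (fun n => (hσcond n).ae_nonneg_of_cond ((hσ.ae_pos hσm).mono fun _ h => h.le))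
      (hτcond.ae_nonneg_of_cond hτ0) (fun n => hRind.comp measurable_id (measurable_pi_apply n))
      (fun n => (hσcond n).lintegral_ofReal_eq_of_cond),
    lintegral_natCast_eq_of_measure_eq_geometric hRm hp0 (by linarith) hRlaw,
    hτcond.lintegral_ofReal_eq_of_cond, hq, hpe]
  have hcancel : ENNReal.ofReal ((1 - p) / p) * (ENNReal.ofReal (1 - p))⁻¹ =
      (ENNReal.ofReal p)⁻¹ := by
    rw [ENNReal.ofReal_div_of_pos hp0, div_eq_mul_inv, mul_right_comm,
      ENNReal.mul_inv_cancel (ENNReal.ofReal_pos.2 hp1).ne' ENNReal.ofReal_ne_top, one_mul]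
  rw [← mul_assoc, hcancel, ← mul_add, hσ.setLIntegral_lt_add_setLIntegral_gt hr hσm hτm hστ, hq,
    ← ENNReal.ofReal_inv_of_pos hp0, ← ENNReal.ofReal_mul (by positivity),
    ← ENNReal.ofReal_mul (by positivity), ENNReal.toReal_ofReal (by positivity)]
  field_simp

/-- Exact mean FPT under exponential resetting: `E[T] = (1-p)/(r p)` where
`T = ∑_{n=1}^R σₙ⁻ + τ⁻`, `R` geometric with success probability `p`,
`σ⁻` has the law of `σ` conditioned on `{σ < τ}`, and `τ⁻` has the law of `τ`
conditioned on `{τ < σ}`, all independent. -/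
theorem mean_fpt_exponential_resetting
    {Ω : Type*} [MeasureSpace Ω] [IsProbabilityMeasure (ℙ : Measure Ω)]
    (r : ℝ) (hr : 0 < r)
    (τ σ : Ω → ℝ) (hτm : Measurable τ) (hσm : Measurable σ)
    (hτpos : ℙ {ω | τ ω ≤ 0} = 0)
    (hστ : IndepFun σ τ ℙ)
    -- σ is exponentially distributed with rate r
    (hσexp : ∀ t : ℝ, 0 ≤ t → ℙ {ω | t < σ ω} = ENNReal.ofReal (Real.exp (-r * t)))
    (p : ℝ) (hp : p = (ℙ {ω | τ ω < σ ω}).toReal) (hp0 : 0 < p)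
    -- the components of T, on the same space
    (R : Ω → ℕ) (σm : ℕ → Ω → ℝ) (τm : Ω → ℝ)
    (hRm : Measurable R) (hσmm : ∀ n, Measurable (σm n)) (hτmm : Measurable τm)
    (hRlaw : ∀ n : ℕ, ℙ {ω | R ω = n} = ENNReal.ofReal ((1 - p) ^ n * p))
    (hσmlaw : ∀ n, ∀ t : ℝ, ℙ {ω | t < σm n ω} =
      ℙ {ω | t < σ ω ∧ σ ω < τ ω} / ℙ {ω | σ ω < τ ω})
    (hτmlaw : ∀ t : ℝ, ℙ {ω | t < τm ω} =
      ℙ {ω | t < τ ω ∧ τ ω < σ ω} / ℙ {ω | τ ω < σ ω})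
    (hiid : iIndepFun σm ℙ)
    (hRind : IndepFun R (fun ω => fun n => σm n ω) ℙ)
    (hτind : IndepFun τm (fun ω => (R ω, fun n => σm n ω)) ℙ)
    (T : Ω → ℝ) (hT : ∀ ω, T ω = (∑ n ∈ Finset.Icc 1 (R ω), σm n ω) + τm ω) :
    ∫ ω, T ω ∂ℙ = (1 - p) / (r * p) :=
  mean_fpt_exponential_resetting_general r hr τ σ hτm hσm hτpos hστ hσexp p hp hp0 R σm τm hRm hσmm
    hτmm hRlaw hσmlaw hτmlaw hRind T hT
end

section
/- Under the setup σ = Y/r with Y > 0, E[Y] = 1, E[e^{δY}] < ∞ for some δ > 0, and τ > 0 independent of σ with P(τ ≤ 0) = 0, for every integer m ≥ 1 the conditioned reset time satisfies E[(σ⁻)^m] / E[σ^m] → 1 as r → ∞, where σ⁻ is σ conditioned on σ < τ. -/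
/-!
After cancelling `r ^ m`, the ratio is `E[Y^m 1_{Y/r<τ}] / (P(Y/r < τ) E[Y^m])`. As `r → ∞`,
`Y/r → 0` while `τ > 0` a.s., so `1_{Y/r<τ} → 1` a.s.; dominated convergence (by `Y^m`, which is
integrable thanks to the exponential moment) gives `E[Y^m 1_{Y/r<τ}] → E[Y^m]` and
`P(Y/r < τ) → 1`, and `E[Y^m] > 0` because `Y > 0` a.s.
-/

open MeasureTheory ProbabilityTheory Filter Real Topology

section

variable {Ω : Type*} [MeasurableSpace Ω] {μ : Measure Ω}

lemma integrable_pow_of_integrable_exp_mul_of_nonneg [IsFiniteMeasure μ] {X : Ω → ℝ} {t : ℝ}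
    (hXm : AEMeasurable X μ) (hX : ∀ᵐ ω ∂μ, 0 ≤ X ω) (ht : 0 < t)
    (hexp : Integrable (fun ω ↦ exp (t * X ω)) μ) (n : ℕ) :
    Integrable (fun ω ↦ X ω ^ n) μ := by
  have hexp_neg : Integrable (fun ω ↦ exp (-t * X ω)) μ := by
    refine (integrable_const (1 : ℝ)).mono' (by fun_prop) ?_
    filter_upwards [hX] with ω hω
    rw [norm_of_nonneg (exp_pos _).le, exp_le_one_iff]
    exact mul_nonpos_of_nonpos_of_nonneg (neg_nonpos.2 ht.le) hω
  exact integrable_pow_of_integrable_exp_mul ht.ne' hexp hexp_neg n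

lemma integral_pos_of_ae_pos [NeZero μ] {f : Ω → ℝ} (hf : ∀ᵐ ω ∂μ, 0 < f ω)
    (hfi : Integrable f μ) : 0 < ∫ ω, f ω ∂μ := by
  rw [integral_pos_iff_support_of_nonneg_ae (hf.mono fun _ h ↦ h.le) hfi, pos_iff_ne_zero]
  intro hsupp
  have hzero : ∀ᵐ ω ∂μ, f ω = 0 := by
    simpa [Function.mem_support] using (measure_eq_zero_iff_ae_notMem.1 hsupp)
  have : ∀ᵐ _ ∂μ, False := by
    filter_upwards [hf, hzero] with ω hpos hz
    exact hpos.ne' hz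
  exact NeZero.ne μ (ae_eq_bot.1 (eventually_false_iff_eq_bot.1 this))

variable {ι : Type*} {l : Filter ι} [l.IsCountablyGenerated] {A : ι → Set Ω}

lemma tendsto_setIntegral_of_ae_eventually_mem {E : Type*} [NormedAddCommGroup E]
    [NormedSpace ℝ E] {f : Ω → E} (hA : ∀ i, MeasurableSet (A i)) (hf : Integrable f μ)
    (hmem : ∀ᵐ ω ∂μ, ∀ᶠ i in l, ω ∈ A i) :
    Tendsto (fun i ↦ ∫ ω in A i, f ω ∂μ) l (𝓝 (∫ ω, f ω ∂μ)) := by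
  simp_rw [← integral_indicator (hA _)]
  refine tendsto_integral_filter_of_dominated_convergence (fun ω ↦ ‖f ω‖)
    (Eventually.of_forall fun i ↦ hf.aestronglyMeasurable.indicator (hA i))
    (Eventually.of_forall fun i ↦ Eventually.of_forall fun ω ↦ norm_indicator_le_norm_self f ω)
    hf.norm ?_
  filter_upwards [hmem] with ω hω
  refine tendsto_const_nhds.congr' ?_
  filter_upwards [hω] with i hi
  rw [Set.indicator_of_mem hi]

lemma tendsto_measureReal_of_ae_eventually_mem [IsFiniteMeasure μ]
    (hA : ∀ i, MeasurableSet (A i)) (hmem : ∀ᵐ ω ∂μ, ∀ᶠ i in l, ω ∈ A i) :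
    Tendsto (fun i ↦ μ.real (A i)) l (𝓝 (μ.real Set.univ)) := by
  simpa using tendsto_setIntegral_of_ae_eventually_mem hA (integrable_const (1 : ℝ)) hmem

end

theorem conditioned_moments_equiv_general
    {Ω : Type*} [MeasureSpace Ω] [IsProbabilityMeasure (ℙ : Measure Ω)]
    (τ Y : Ω → ℝ) (hτm : Measurable τ) (hYm : Measurable Y)
    (hτpos : ℙ {ω | τ ω ≤ 0} = 0)
    (hYpos : ℙ {ω | Y ω ≤ 0} = 0)
    (δ : ℝ) (hδ : 0 < δ)
    (hYmgf : Integrable (fun ω => Real.exp (δ * Y ω)) ℙ)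
    (m : ℕ) :
    Tendsto (fun r : ℝ =>
        ((∫ ω in {ω | Y ω / r < τ ω}, (Y ω / r) ^ m ∂ℙ) /
            (ℙ {ω | Y ω / r < τ ω}).toReal) /
          (∫ ω, (Y ω / r) ^ m ∂ℙ))
      atTop (nhds 1) := by
  set A : ℝ → Set Ω := fun r ↦ {ω | Y ω / r < τ ω}
  have hA : ∀ r, MeasurableSet (A r) := fun r ↦ measurableSet_lt (hYm.div_const r) hτm
  have hY : ∀ᵐ ω, 0 < Y ω := by simpa [ae_iff] using hYpos
  have hτ : ∀ᵐ ω, 0 < τ ω := by simpa [ae_iff] using hτpos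
  have hmem : ∀ᵐ ω, ∀ᶠ r in atTop, ω ∈ A r := hτ.mono fun ω hω ↦
    (tendsto_const_nhds.div_atTop tendsto_id).eventually_lt_const hω
  have hint := integrable_pow_of_integrable_exp_mul_of_nonneg hYm.aemeasurable
    (hY.mono fun _ h ↦ h.le) hδ hYmgf m
  have hI := integral_pos_of_ae_pos (hY.mono fun _ h ↦ pow_pos h m) hint
  have hlim := (tendsto_setIntegral_of_ae_eventually_mem hA hint hmem).div
    ((tendsto_measureReal_of_ae_eventually_mem hA hmem).mul_const (∫ ω, Y ω ^ m))
    (by simp [hI.ne'])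
  rw [probReal_univ, one_mul, div_self hI.ne'] at hlim
  refine hlim.congr' ?_
  filter_upwards [eventually_ne_atTop 0] with r hr
  simp only [Pi.div_apply, div_pow, integral_div, measureReal_def]
  rw [div_right_comm _ (r ^ m), div_div_div_cancel_right₀ (pow_ne_zero m hr), div_div]

/-- `E[(σ⁻)^m] / E[σ^m] → 1` as `r → ∞`, where `σ = Y/r` and `σ⁻` is `σ`
conditioned on `{σ < τ}`, so that
`E[(σ⁻)^m] = E[σ^m 1_{σ<τ}] / P(σ < τ)`. -/
theorem conditioned_moments_equiv
    {Ω : Type*} [MeasureSpace Ω] [IsProbabilityMeasure (ℙ : Measure Ω)]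
    (τ Y : Ω → ℝ) (hτm : Measurable τ) (hYm : Measurable Y)
    (hτpos : ℙ {ω | τ ω ≤ 0} = 0)
    (hYpos : ℙ {ω | Y ω ≤ 0} = 0)
    (hYmean : ∫ ω, Y ω ∂ℙ = 1)
    (δ : ℝ) (hδ : 0 < δ)
    (hYmgf : Integrable (fun ω => Real.exp (δ * Y ω)) ℙ)
    (hindep : IndepFun τ Y ℙ)
    (hp : ∀ r : ℝ, 0 < r → 0 < (ℙ {ω | Y ω / r < τ ω}).toReal)
    (m : ℕ) (hm : 1 ≤ m) :
    Tendsto (fun r : ℝ =>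
        ((∫ ω in {ω | Y ω / r < τ ω}, (Y ω / r) ^ m ∂ℙ) /
            (ℙ {ω | Y ω / r < τ ω}).toReal) /
          (∫ ω, (Y ω / r) ^ m ∂ℙ))
      atTop (nhds 1) :=
  conditioned_moments_equiv_general τ Y hτm hYm hτpos hYpos δ hδ hYmgf m
end

section
/- Let τ > 0 have distribution function F_τ with lim_{t→0⁺} t^d ln F_τ(t) = −C for some C > 0, d > 0, and let p(r) = ∫₀^∞ e^{−rt} dF_τ(t). Then ln p(r) ∼ −γ r^{d/(d+1)} as r → ∞, where γ = ((d+1)/d^{d/(d+1)}) C^{1/(d+1)}. -/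
open MeasureTheory ProbabilityTheory Filter Real

/-!
Put `r = s ^ (d + 1)`, so that `F t = ℙ (τ ≤ t) ≈ exp (-C t ^ (-d))` at the scale `t = u / s`
contributes `exp (-c u ^ (-d) s ^ d)` and `e ^ (-r t)` contributes `exp (-u s ^ d)`.
The single point `t = u / s` gives `p r ≥ e ^ (-r t) F t`, hence `log p r ≥ -(u + c u ^ (-d)) s ^ d`
for `c > C`. Conversely, cutting `τ` at the points `j δ / s`, of which boundedly many are needed,
gives `log p r ≤ O(1) - (min_u (u + c u ^ (-d)) - δ) s ^ d` for `c < C`. Both constants tend to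
`γ = min_u (u + C u ^ (-d))` as `c → C` and `δ → 0`.
-/

open Topology

theorem rpow_neg_mul_rpow_mul {t : ℝ} (ht : 0 < t) (d y : ℝ) : t ^ (-d) * (t ^ d * y) = y := by
  rw [← mul_assoc, ← rpow_add ht, neg_add_cancel, rpow_zero, one_mul]

theorem div_rpow_neg {s u : ℝ} (hs : 0 < s) (hu : 0 ≤ u) (d : ℝ) :
    (u / s) ^ (-d) = u ^ (-d) * s ^ d := by
  rw [div_rpow hu hs.le, rpow_neg hs.le, div_inv_eq_mul]

theorem rpow_add_one_mul_div {s : ℝ} (hs : 0 < s) (d u : ℝ) :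
    s ^ (d + 1) * (u / s) = u * s ^ d := by
  rw [rpow_add_one hs.ne']
  field_simp

/-- `laplaceRate d c = min_{u > 0} (u + c * u ^ (-d))`, attained at `u = (d * c) ^ (1 / (d + 1))`;
`laplaceRate d C` is the constant `γ` of the theorem. -/
noncomputable def laplaceRate (d c : ℝ) : ℝ := (d + 1) / d ^ (d / (d + 1)) * c ^ (1 / (d + 1))

section Rate

variable {d c : ℝ}

theorem one_add_inv_le_add_rpow_neg_div {x : ℝ} (hd : 0 < d) (hx : 0 < x) :
    1 + d⁻¹ ≤ x + x ^ (-d) / d := by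
  -- tangent lines of `exp` at `0` for `x = exp (log x)` and `x ^ (-d) = exp (-d * log x)`
  have h₁ : 1 + log x ≤ x := by linarith [log_le_sub_one_of_pos hx]
  have h₂ : 1 - d * log x ≤ x ^ (-d) := by
    rw [rpow_def_of_pos hx]; linarith [add_one_le_exp (log x * -d)]
  calc 1 + d⁻¹ = (1 + log x) + (1 - d * log x) / d := by field_simp; ring
    _ ≤ x + x ^ (-d) / d := by gcongr

theorem mul_rpow_neg_eq_div (hd : 0 < d) (hc : 0 < c) :
    c * ((d * c) ^ (1 / (d + 1))) ^ (-d) = (d * c) ^ (1 / (d + 1)) / d := by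
  have hdc : 0 < d * c := by positivity
  rw [← rpow_mul hdc.le, eq_div_iff hd.ne']
  calc c * (d * c) ^ (1 / (d + 1) * -d) * d
      = (d * c) ^ (1 : ℝ) * (d * c) ^ (1 / (d + 1) * -d) := by rw [rpow_one]; ring
    _ = (d * c) ^ (1 / (d + 1)) := by
        rw [← rpow_add hdc]; congr 1; field_simp; ring

theorem laplaceRate_eq_mul (hd : 0 < d) (hc : 0 ≤ c) :
    laplaceRate d c = (d * c) ^ (1 / (d + 1)) * (1 + d⁻¹) := by
  have hsplit : d ^ (1 / (d + 1)) = d / d ^ (d / (d + 1)) := by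
    rw [eq_div_iff (by positivity), ← rpow_add hd, ← add_div, add_comm, div_self (by positivity),
      rpow_one]
  rw [laplaceRate, mul_rpow hd.le hc, hsplit]
  field_simp

theorem laplaceRate_le_add_mul_rpow_neg {u : ℝ} (hd : 0 < d) (hc : 0 < c) (hu : 0 < u) :
    laplaceRate d c ≤ u + c * u ^ (-d) := by
  set v := (d * c) ^ (1 / (d + 1))
  have hv : 0 < v := by positivity
  have hc' : c = v / d * v ^ d := by
    rw [← mul_rpow_neg_eq_div hd hc, mul_assoc, ← rpow_add hv, neg_add_cancel, rpow_zero, mul_one]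
  calc laplaceRate d c = v * (1 + d⁻¹) := laplaceRate_eq_mul hd hc.le
    _ ≤ v * (u / v + (u / v) ^ (-d) / d) := by
        gcongr v * ?_; exact one_add_inv_le_add_rpow_neg_div hd (by positivity)
    _ = u + c * u ^ (-d) := by
        rw [div_rpow_neg hv hu.le, hc']; field_simp

theorem add_mul_rpow_neg_eq_laplaceRate (hd : 0 < d) (hc : 0 < c) :
    (d * c) ^ (1 / (d + 1)) + c * ((d * c) ^ (1 / (d + 1))) ^ (-d) = laplaceRate d c := by
  rw [mul_rpow_neg_eq_div hd hc, laplaceRate_eq_mul hd hc.le]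
  ring

theorem continuous_laplaceRate (hd : 0 < d) : Continuous (laplaceRate d) :=
  continuous_const.mul (continuous_rpow_const (by positivity))

end Rate

section SmallValues

variable {f : ℝ → ℝ} {C c d : ℝ}

theorem eventually_exp_neg_mul_rpow_neg_le
    (hf : Tendsto (fun t => t ^ d * log (f t)) (𝓝[>] 0) (𝓝 (-C))) (hf₀ : ∀ t, 0 ≤ f t)
    (hC : 0 < C) (hc : C < c) :
    ∀ᶠ t in 𝓝[>] 0, exp (-c * t ^ (-d)) ≤ f t := by
  filter_upwards [hf.eventually (Ioo_mem_nhds (neg_lt_neg hc) (neg_lt_zero.2 hC)),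
    self_mem_nhdsWithin] with t ⟨hlo, hhi⟩ (ht : 0 < t)
  -- `f t = 0` would make `t ^ d * log (f t)` vanish
  have hpos : 0 < f t := (hf₀ t).lt_of_ne' fun h => by simp [h] at hhi
  rw [← exp_log hpos, ← rpow_neg_mul_rpow_mul ht d (log (f t)), mul_comm (-c)]
  exact exp_le_exp.2 (mul_le_mul_of_nonneg_left hlo.le (rpow_nonneg ht.le _))

theorem eventually_le_exp_neg_mul_rpow_neg
    (hf : Tendsto (fun t => t ^ d * log (f t)) (𝓝[>] 0) (𝓝 (-C))) (hc : c < C) :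
    ∀ᶠ t in 𝓝[>] 0, f t ≤ exp (-c * t ^ (-d)) := by
  filter_upwards [hf.eventually (gt_mem_nhds (neg_lt_neg hc)), self_mem_nhdsWithin]
    with t hlt (ht : 0 < t)
  calc f t ≤ exp (log (f t)) := le_exp_log _
    _ ≤ exp (-c * t ^ (-d)) := by
        rw [← rpow_neg_mul_rpow_mul ht d (log (f t)), mul_comm (-c)]
        exact exp_le_exp.2 (mul_le_mul_of_nonneg_left hlt.le (rpow_nonneg ht.le _))

end SmallValues

section Laplace

variable {Ω : Type*} [MeasurableSpace Ω] {μ : Measure Ω} {τ : Ω → ℝ} {r : ℝ}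

theorem integrable_exp_neg_mul [IsFiniteMeasure μ] (hτm : Measurable τ)
    (hτ : ∀ᵐ ω ∂μ, 0 ≤ τ ω) (hr : 0 ≤ r) : Integrable (fun ω => exp (-r * τ ω)) μ := by
  refine (integrable_const (1 : ℝ)).mono' (by fun_prop) ?_
  filter_upwards [hτ] with ω hω
  rw [norm_of_nonneg (exp_pos _).le, exp_le_one_iff]
  nlinarith

theorem exp_neg_mul_mul_measureReal_le_integral [IsFiniteMeasure μ] (hτm : Measurable τ)
    (hτ : ∀ᵐ ω ∂μ, 0 ≤ τ ω) (hr : 0 ≤ r) (t : ℝ) :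
    exp (-r * t) * μ.real {ω | τ ω ≤ t} ≤ ∫ ω, exp (-r * τ ω) ∂μ := by
  have hint := integrable_exp_neg_mul hτm hτ hr
  calc exp (-r * t) * μ.real {ω | τ ω ≤ t} = ∫ _ in {ω | τ ω ≤ t}, exp (-r * t) ∂μ := by
        rw [setIntegral_const, smul_eq_mul, mul_comm]
    _ ≤ ∫ ω in {ω | τ ω ≤ t}, exp (-r * τ ω) ∂μ :=
        setIntegral_mono_on (integrableOn_const (measure_ne_top _ _)) hint.integrableOn
          (hτm measurableSet_Iic) fun ω (hω : τ ω ≤ t) => exp_le_exp.2 (by nlinarith)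
    _ ≤ ∫ ω, exp (-r * τ ω) ∂μ :=
        setIntegral_le_integral hint (.of_forall fun ω => (exp_pos _).le)

theorem exp_neg_mul_le_sum_ite {θ x : ℝ} (hr : 0 ≤ r) (hθ : 0 < θ) (hx : 0 ≤ x) (K : ℕ) :
    exp (-r * x) ≤ ∑ j ∈ Finset.range K, (if x ≤ (j + 1) * θ then exp (-r * (j * θ)) else 0)
      + exp (-r * (K * θ)) := by
  have hnonneg : ∀ j ∈ Finset.range K,
      0 ≤ (if x ≤ (j + 1) * θ then exp (-r * (j * θ)) else 0) := fun j _ => by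
    split_ifs <;> positivity
  rcases lt_or_ge x (K * θ) with hxK | hxK
  · set j := ⌊x / θ⌋₊
    have hjx : j * θ ≤ x := (le_div_iff₀ hθ).1 (Nat.floor_le (by positivity))
    have hxj : x ≤ (j + 1) * θ := (div_le_iff₀ hθ).1 (Nat.lt_floor_add_one _).le
    have hjK : j ∈ Finset.range K :=
      Finset.mem_range.2 ((Nat.floor_lt (by positivity)).2 ((div_lt_iff₀ hθ).2 hxK))
    calc exp (-r * x) ≤ (if x ≤ (j + 1) * θ then exp (-r * (j * θ)) else 0) := by
          rw [if_pos hxj]; exact exp_le_exp.2 (by nlinarith)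
      _ ≤ ∑ j ∈ Finset.range K, (if x ≤ (j + 1) * θ then exp (-r * (j * θ)) else 0) :=
          Finset.single_le_sum hnonneg hjK
      _ ≤ _ := le_add_of_nonneg_right (exp_pos _).le
  · calc exp (-r * x) ≤ exp (-r * (K * θ)) := exp_le_exp.2 (by nlinarith)
      _ ≤ _ := le_add_of_nonneg_left (Finset.sum_nonneg hnonneg)

theorem integral_exp_neg_mul_le_sum [IsProbabilityMeasure μ] (hτm : Measurable τ)
    (hτ : ∀ᵐ ω ∂μ, 0 ≤ τ ω) (hr : 0 ≤ r) {θ : ℝ} (hθ : 0 < θ) (K : ℕ) :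
    ∫ ω, exp (-r * τ ω) ∂μ ≤
      ∑ j ∈ Finset.range K, exp (-r * (j * θ)) * μ.real {ω | τ ω ≤ (j + 1) * θ}
        + exp (-r * (K * θ)) := by
  have hmeas (t : ℝ) : MeasurableSet {ω | τ ω ≤ t} := hτm measurableSet_Iic
  have hind (j : ℕ) :
      Integrable ({ω | τ ω ≤ (j + 1) * θ}.indicator fun _ => exp (-r * (j * θ))) μ :=
    (integrable_const _).indicator (hmeas _)
  have hsum := integrable_finsetSum (Finset.range K) fun j _ => hind j
  calc ∫ ω, exp (-r * τ ω) ∂μ ≤ ∫ ω, (∑ j ∈ Finset.range K,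
        {ω | τ ω ≤ (j + 1) * θ}.indicator (fun _ => exp (-r * (j * θ))) ω
          + exp (-r * (K * θ))) ∂μ := by
        refine integral_mono_ae (integrable_exp_neg_mul hτm hτ hr)
          (hsum.add (integrable_const _)) ?_
        filter_upwards [hτ] with ω hω
        simpa only [Set.indicator_apply, Set.mem_ofPred_eq] using
          exp_neg_mul_le_sum_ite hr hθ hω K
    _ = _ := by
        rw [integral_add hsum (integrable_const _), integral_finsetSum _ fun j _ => hind j,
          integral_const, probReal_univ, one_smul]
        congr 1
        refine Finset.sum_congr rfl fun j _ => ?_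
        rw [integral_indicator_const _ (hmeas _), smul_eq_mul, mul_comm]

end Laplace

section Asymptotics

variable {Ω : Type*} [MeasurableSpace Ω] {μ : Measure Ω} {τ : Ω → ℝ} {c d : ℝ}

theorem eventually_neg_mul_rpow_le_log_integral [IsFiniteMeasure μ] (hτm : Measurable τ)
    (hτ : ∀ᵐ ω ∂μ, 0 ≤ τ ω) {u : ℝ} (hu : 0 < u)
    (hF : ∀ᶠ t in 𝓝[>] 0, exp (-c * t ^ (-d)) ≤ μ.real {ω | τ ω ≤ t}) :
    ∀ᶠ s in atTop, -(u + c * u ^ (-d)) * s ^ d ≤ log (∫ ω, exp (-s ^ (d + 1) * τ ω) ∂μ) := by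
  have ht : Tendsto (fun s => u / s) atTop (𝓝[>] 0) :=
    tendsto_nhdsWithin_iff.2 ⟨tendsto_const_nhds.div_atTop tendsto_id,
      (eventually_gt_atTop 0).mono fun s hs => div_pos hu hs⟩
  filter_upwards [ht.eventually hF, eventually_gt_atTop 0] with s hFs hs
  have hFpos : 0 < μ.real {ω | τ ω ≤ u / s} := (exp_pos _).trans_le hFs
  calc -(u + c * u ^ (-d)) * s ^ d
      = log (exp (-s ^ (d + 1) * (u / s)) * exp (-c * (u / s) ^ (-d))) := by
        rw [← exp_add, log_exp, neg_mul (s ^ (d + 1)), rpow_add_one_mul_div hs,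
          div_rpow_neg hs hu.le]
        ring
    _ ≤ log (exp (-s ^ (d + 1) * (u / s)) * μ.real {ω | τ ω ≤ u / s}) :=
        log_le_log (by positivity) (by gcongr)
    _ ≤ log (∫ ω, exp (-s ^ (d + 1) * τ ω) ∂μ) :=
        log_le_log (by positivity)
          (exp_neg_mul_mul_measureReal_le_integral hτm hτ (by positivity) _)

theorem exists_eventually_log_integral_le [IsProbabilityMeasure μ] (hτm : Measurable τ)
    (hτ : ∀ᵐ ω ∂μ, 0 ≤ τ ω) {m δ : ℝ} (hδ : 0 < δ) (hm : ∀ u > 0, m ≤ u + c * u ^ (-d))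
    (hF : ∀ᶠ t in 𝓝[>] 0, μ.real {ω | τ ω ≤ t} ≤ exp (-c * t ^ (-d))) :
    ∃ A, ∀ᶠ s in atTop, log (∫ ω, exp (-s ^ (d + 1) * τ ω) ∂μ) ≤ A - (m - δ) * s ^ d := by
  obtain ⟨ε, hε, hεF⟩ := mem_nhdsGT_iff_exists_Ioo_subset.1 hF
  set K := ⌈m / δ⌉₊
  have hmK : m ≤ K * δ := (div_le_iff₀ hδ).1 (Nat.le_ceil _)
  refine ⟨log (K + 1), ?_⟩
  have hsmall : Tendsto (fun s => K * δ / s) atTop (𝓝 0) :=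
    tendsto_const_nhds.div_atTop tendsto_id
  filter_upwards [hsmall.eventually (gt_mem_nhds hε), eventually_gt_atTop 0] with s hsε hs
  have hr : 0 ≤ s ^ (d + 1) := by positivity
  have hterm : ∀ j ∈ Finset.range K,
      exp (-s ^ (d + 1) * (j * (δ / s))) * μ.real {ω | τ ω ≤ (j + 1) * (δ / s)} ≤
        exp (-((m - δ) * s ^ d)) := by
    intro j hj
    have hjK : (j + 1 : ℝ) ≤ K := by exact_mod_cast Finset.mem_range.1 hj
    have hmem : (j + 1) * δ / s ∈ Set.Ioo 0 ε :=
      ⟨by positivity, lt_of_le_of_lt (by gcongr) hsε⟩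
    rw [← mul_div_assoc (j : ℝ), ← mul_div_assoc ((j : ℝ) + 1)]
    calc exp (-s ^ (d + 1) * (j * δ / s)) * μ.real {ω | τ ω ≤ (j + 1) * δ / s}
        ≤ exp (-s ^ (d + 1) * (j * δ / s)) * exp (-c * ((j + 1) * δ / s) ^ (-d)) := by
          gcongr; exact hεF hmem
      _ = exp (-(((j + 1) * δ + c * ((j + 1) * δ) ^ (-d) - δ) * s ^ d)) := by
          rw [← exp_add, neg_mul (s ^ (d + 1)), rpow_add_one_mul_div hs,
            div_rpow_neg hs (by positivity)]
          ring_nf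
      _ ≤ exp (-((m - δ) * s ^ d)) := by
          gcongr exp (-((?_ - δ) * s ^ d)); exact hm _ (by positivity)
  have htail : exp (-s ^ (d + 1) * (K * (δ / s))) ≤ exp (-((m - δ) * s ^ d)) := by
    rw [← mul_div_assoc, neg_mul (s ^ (d + 1)), rpow_add_one_mul_div hs]
    gcongr
    linarith
  have hp : ∫ ω, exp (-s ^ (d + 1) * τ ω) ∂μ ≤ (K + 1) * exp (-((m - δ) * s ^ d)) :=
    calc _ ≤ _ := integral_exp_neg_mul_le_sum hτm hτ hr (by positivity : 0 < δ / s) K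
      _ ≤ ∑ _j ∈ Finset.range K, exp (-((m - δ) * s ^ d)) + exp (-((m - δ) * s ^ d)) :=
          add_le_add (Finset.sum_le_sum hterm) htail
      _ = (K + 1) * exp (-((m - δ) * s ^ d)) := by
          rw [Finset.sum_const, Finset.card_range, nsmul_eq_mul]; ring
  calc log (∫ ω, exp (-s ^ (d + 1) * τ ω) ∂μ) ≤ log ((K + 1) * exp (-((m - δ) * s ^ d))) :=
        log_le_log (integral_exp_pos (integrable_exp_neg_mul hτm hτ hr)) hp
    _ = log (K + 1) - (m - δ) * s ^ d := by
        rw [log_mul (by positivity) (exp_pos _).ne', log_exp]; ring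

theorem tendsto_log_integral_div_rpow [IsProbabilityMeasure μ] (hτm : Measurable τ)
    (hτ : ∀ᵐ ω ∂μ, 0 ≤ τ ω) {C : ℝ} (hC : 0 < C) (hd : 0 < d)
    (hF : Tendsto (fun t => t ^ d * log (μ.real {ω | τ ω ≤ t})) (𝓝[>] 0) (𝓝 (-C))) :
    Tendsto (fun s => log (∫ ω, exp (-s ^ (d + 1) * τ ω) ∂μ) / s ^ d) atTop
      (𝓝 (-laplaceRate d C)) := by
  refine tendsto_order.2 ⟨fun a ha => ?_, fun a ha => ?_⟩
  · set u := (d * C) ^ (1 / (d + 1))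
    have hu : 0 < u := by positivity
    have hφ : Tendsto (fun c => u + c * u ^ (-d)) (𝓝[>] C) (𝓝 (laplaceRate d C)) := by
      rw [← add_mul_rpow_neg_eq_laplaceRate hd hC]
      exact ((by fun_prop : Continuous fun c => u + c * u ^ (-d)).tendsto C).mono_left
        nhdsWithin_le_nhds
    obtain ⟨c, hcφ, hCc : C < c⟩ :=
      ((hφ.eventually (gt_mem_nhds (show laplaceRate d C < -a by linarith))).and
        self_mem_nhdsWithin).exists
    filter_upwards [eventually_neg_mul_rpow_le_log_integral hτm hτ hu
      (eventually_exp_neg_mul_rpow_neg_le hF (fun _ => measureReal_nonneg) hC hCc),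
      eventually_gt_atTop 0] with s hs hs₀
    rw [lt_div_iff₀ (rpow_pos_of_pos hs₀ d)]
    nlinarith [rpow_pos_of_pos hs₀ d]
  · set δ := (laplaceRate d C + a) / 2 with hδ_def
    have hδ : 0 < δ := by linarith
    have hG : Tendsto (laplaceRate d) (𝓝[<] C) (𝓝 (laplaceRate d C)) :=
      ((continuous_laplaceRate hd).tendsto C).mono_left nhdsWithin_le_nhds
    obtain ⟨c, hcG, hc₀, hcC⟩ :=
      ((hG.eventually (lt_mem_nhds (show δ - a < laplaceRate d C by linarith))).and
        (Ioo_mem_nhdsLT hC)).exists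
    obtain ⟨A, hA⟩ := exists_eventually_log_integral_le hτm hτ hδ
      (fun u hu => laplaceRate_le_add_mul_rpow_neg hd hc₀ hu)
      (eventually_le_exp_neg_mul_rpow_neg hF hcC)
    have hlim : Tendsto (fun s => A / s ^ d - (laplaceRate d c - δ)) atTop
        (𝓝 (0 - (laplaceRate d c - δ))) :=
      (tendsto_const_nhds.div_atTop (tendsto_rpow_atTop hd)).sub_const _
    filter_upwards [hA, hlim.eventually (gt_mem_nhds (show 0 - (laplaceRate d c - δ) < a by
      linarith)), eventually_gt_atTop 0] with s hs hlt hs₀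
    have hsd := rpow_pos_of_pos hs₀ d
    calc log (∫ ω, exp (-s ^ (d + 1) * τ ω) ∂μ) / s ^ d
        ≤ A / s ^ d - (laplaceRate d c - δ) := by
          rw [div_le_iff₀ hsd, sub_mul, div_mul_cancel₀ _ hsd.ne']
          exact hs
      _ < a := hlt

end Asymptotics

theorem log_success_prob_asymptotics
    {Ω : Type*} [MeasureSpace Ω] [IsProbabilityMeasure (ℙ : Measure Ω)]
    (τ : Ω → ℝ) (hτm : Measurable τ) (hτpos : ℙ {ω | τ ω ≤ 0} = 0)
    (C d : ℝ) (hC : 0 < C) (hd : 0 < d)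
    (hF : Tendsto (fun t : ℝ => t ^ d * Real.log (ℙ {ω | τ ω ≤ t}).toReal)
      (nhdsWithin 0 (Set.Ioi 0)) (nhds (-C)))
    (γ : ℝ) (hγ : γ = ((d + 1) / d ^ (d / (d + 1))) * C ^ (1 / (d + 1))) :
    Tendsto (fun r : ℝ =>
        Real.log (∫ ω, Real.exp (-r * τ ω) ∂ℙ) / (-γ * r ^ (d / (d + 1))))
      atTop (nhds 1) := by
  have hτ : ∀ᵐ ω ∂(ℙ : Measure Ω), 0 ≤ τ ω :=
    ae_iff.2 (measure_mono_null (fun ω hω => (not_le.1 hω).le) hτpos)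
  have hγ₀ : -γ ≠ 0 := neg_ne_zero.2 (by rw [hγ]; positivity)
  -- substitute `r = s ^ (d + 1)`, i.e. `s = r ^ (1 / (d + 1))`
  have hlim := ((tendsto_log_integral_div_rpow hτm hτ hC hd hF).comp
    (tendsto_rpow_atTop (by positivity : (0 : ℝ) < 1 / (d + 1)))).div_const (-γ)
  rw [show laplaceRate d C = γ from hγ.symm, div_self hγ₀] at hlim
  refine hlim.congr' ?_
  filter_upwards [eventually_gt_atTop 0] with r hr
  simp only [Function.comp_apply, ← rpow_mul hr.le]
  rw [one_div_mul_cancel (by positivity), rpow_one, one_div_mul_eq_div, div_div, mul_comm]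
end

section
/- The Laplace transform of t ↦ erfc(√(c/t)) for c > 0 is ∫₀^∞ e^{−st} erfc(√(c/t)) dt = e^{−2√(cs)}/s for all s > 0, where erfc(z) = (2/√π) ∫_z^∞ e^{−u²} du. -/
open MeasureTheory Real

/-- The complementary error function. -/
noncomputable def erfc (z : ℝ) : ℝ :=
  (2 / Real.sqrt π) * ∫ u in Set.Ioi z, Real.exp (-u ^ 2)

/-!
Write `erfc (√(c / t))` as the integral of `exp (-u ^ 2)` over `u > √(c / t)`, i.e. over the
region `c < t * u ^ 2`, and swap the two integrals. The `t`-integral is elementary and leaves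
`2 / (s * √π) * ∫ u in Ioi 0, exp (-u ^ 2 - c * s / u ^ 2)`. With `b = √(c * s)` the exponent
is `-(u - b / u) ^ 2 - 2 * b`, and the Cauchy–Schlömilch substitution evaluates the rest: for
even integrable `g`, the substitution `x ↦ b / x` shows that `g (x - b / x)` and
`b / x ^ 2 * g (x - b / x)` have the same integral over `Ioi 0`, and their sum integrates to
`∫ v, g v` under `v = x - b / x`.
-/

open Set

section CauchySchlomilch

variable {b : ℝ}

lemma hasDerivAt_sub_const_div {x : ℝ} (hx : x ≠ 0) :
    HasDerivAt (fun x => x - b / x) (1 + b / x ^ 2) x := by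
  simp_rw [div_eq_mul_inv]
  exact ((hasDerivAt_id' x).fun_sub ((hasDerivAt_inv hx).const_mul b)).congr_deriv (by ring)

lemma hasDerivAt_const_div {x : ℝ} (hx : x ≠ 0) :
    HasDerivAt (fun x => b / x) (-(b / x ^ 2)) x := by
  simp_rw [div_eq_mul_inv]
  exact ((hasDerivAt_inv hx).const_mul b).congr_deriv (by ring)

lemma strictMonoOn_sub_const_div (hb : 0 < b) :
    StrictMonoOn (fun x => x - b / x) (Ioi 0) :=
  fun _ hx _ _ hxy => sub_lt_sub hxy (div_lt_div_of_pos_left hb hx hxy)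

lemma image_sub_const_div_Ioi (hb : 0 < b) : (fun x => x - b / x) '' Ioi 0 = univ := by
  refine eq_univ_of_forall fun v => ?_
  -- the positive root of `x ^ 2 - v * x - b`
  have hr : √(v ^ 2 + 4 * b) ^ 2 = v ^ 2 + 4 * b := sq_sqrt (by positivity)
  have hvr : |v| < √(v ^ 2 + 4 * b) := by
    rw [← sqrt_sq_eq_abs]; exact sqrt_lt_sqrt (sq_nonneg v) (by linarith)
  have hx : 0 < (v + √(v ^ 2 + 4 * b)) / 2 := by linarith [neg_le_abs v]
  refine ⟨_, hx, ?_⟩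
  rw [sub_eq_iff_eq_add, ← sub_eq_iff_eq_add', eq_div_iff hx.ne']
  nlinarith

lemma image_const_div_Ioi (hb : 0 < b) : (fun x => b / x) '' Ioi 0 = Ioi 0 := by
  ext y
  refine ⟨?_, fun hy => ⟨b / y, div_pos hb hy, div_div_cancel₀ hb.ne'⟩⟩
  rintro ⟨x, hx, rfl⟩
  exact div_pos hb hx

lemma injOn_const_div (hb : 0 < b) : InjOn (fun x => b / x) (Ioi 0) :=
  fun _ _ _ _ h => by simpa [hb.ne'] using congrArg (b / ·) h

lemma integral_eq_integral_Ioi_mul_comp_sub_const_div (hb : 0 < b) (g : ℝ → ℝ) :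
    ∫ v, g v = ∫ x in Ioi 0, (1 + b / x ^ 2) * g (x - b / x) := by
  rw [← setIntegral_univ, ← image_sub_const_div_Ioi hb,
    integral_image_eq_integral_abs_deriv_smul measurableSet_Ioi
      (fun x hx => (hasDerivAt_sub_const_div (ne_of_gt hx)).hasDerivWithinAt)
      (strictMonoOn_sub_const_div hb).injOn]
  refine setIntegral_congr_fun measurableSet_Ioi fun x _ => ?_
  rw [smul_eq_mul, abs_of_nonneg (by positivity)]

lemma integrable_iff_integrableOn_mul_comp_sub_const_div (hb : 0 < b) {g : ℝ → ℝ} :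
    Integrable g ↔ IntegrableOn (fun x => (1 + b / x ^ 2) * g (x - b / x)) (Ioi 0) := by
  rw [← integrableOn_univ, ← image_sub_const_div_Ioi hb,
    integrableOn_image_iff_integrableOn_abs_deriv_smul measurableSet_Ioi
      (fun x hx => (hasDerivAt_sub_const_div (ne_of_gt hx)).hasDerivWithinAt)
      (strictMonoOn_sub_const_div hb).injOn]
  refine integrableOn_congr_fun (fun x _ => ?_) measurableSet_Ioi
  rw [smul_eq_mul, abs_of_nonneg (by positivity)]

lemma integral_Ioi_mul_comp_const_div (hb : 0 < b) (F : ℝ → ℝ) :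
    ∫ x in Ioi 0, b / x ^ 2 * F (b / x) = ∫ x in Ioi 0, F x := by
  have h := integral_image_eq_integral_abs_deriv_smul measurableSet_Ioi
    (fun x hx => (hasDerivAt_const_div (ne_of_gt hx)).hasDerivWithinAt) (injOn_const_div hb) F
  rw [image_const_div_Ioi hb] at h
  rw [h]
  refine setIntegral_congr_fun measurableSet_Ioi fun x _ => ?_
  rw [smul_eq_mul, abs_neg, abs_of_nonneg (by positivity)]

theorem integral_Ioi_comp_sub_const_div_of_even {g : ℝ → ℝ} (hgm : Measurable g)
    (hg : Integrable g) (heven : ∀ v, g (-v) = g v) (hb : 0 < b) :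
    ∫ x in Ioi 0, g (x - b / x) = (∫ v, g v) / 2 := by
  have hK := (integrable_iff_integrableOn_mul_comp_sub_const_div hb).1 hg
  have hI : IntegrableOn (fun x => g (x - b / x)) (Ioi 0) := by
    refine hK.norm.mono' (hgm.comp (by fun_prop)).aestronglyMeasurable (.of_forall fun x => ?_)
    rw [norm_mul]
    exact le_mul_of_one_le_left (norm_nonneg _)
      (by rw [Real.norm_of_nonneg (by positivity)]; linarith [show 0 ≤ b / x ^ 2 by positivity])
  have hsym : ∫ x in Ioi 0, b / x ^ 2 * g (x - b / x) = ∫ x in Ioi 0, g (x - b / x) := by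
    calc ∫ x in Ioi 0, b / x ^ 2 * g (x - b / x)
        = ∫ x in Ioi 0, b / x ^ 2 * g (b / x - b / (b / x)) := by
          refine setIntegral_congr_fun measurableSet_Ioi fun x (hx : 0 < x) => ?_
          rw [div_div_cancel₀ hb.ne', ← heven, neg_sub]
      _ = ∫ x in Ioi 0, g (x - b / x) :=
          integral_Ioi_mul_comp_const_div hb fun y => g (y - b / y)
  have hsplit : ∫ x in Ioi 0, b / x ^ 2 * g (x - b / x) =
      (∫ x in Ioi 0, (1 + b / x ^ 2) * g (x - b / x)) - ∫ x in Ioi 0, g (x - b / x) := by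
    rw [← integral_sub hK hI]
    congr 1 with x
    ring
  rw [integral_eq_integral_Ioi_mul_comp_sub_const_div hb]
  linarith

end CauchySchlomilch

theorem integral_Ioi_exp_neg_sq_sub_div_sq {a : ℝ} (ha : 0 < a) :
    ∫ x in Ioi 0, exp (-x ^ 2 - a / x ^ 2) = √π / 2 * exp (-2 * √a) := by
  have hgauss : ∫ v, exp (-v ^ 2) = √π := by simpa using integral_gaussian 1
  have hsa : √a ^ 2 = a := sq_sqrt ha.le
  calc ∫ x in Ioi 0, exp (-x ^ 2 - a / x ^ 2)
      = ∫ x in Ioi 0, exp (-2 * √a) * exp (-(x - √a / x) ^ 2) := by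
        refine setIntegral_congr_fun measurableSet_Ioi fun x (hx : 0 < x) => ?_
        nth_rewrite 1 [← hsa]
        rw [← exp_add]
        congr 1
        field_simp
        ring
    _ = √π / 2 * exp (-2 * √a) := by
        have h := integral_Ioi_comp_sub_const_div_of_even (g := fun v => exp (-v ^ 2))
          (by fun_prop) (by simpa using integrable_exp_neg_mul_sq one_pos) (fun v => by simp)
          (sqrt_pos.2 ha)
        beta_reduce at h
        rw [integral_const_mul, h, hgauss]
        ring

theorem integral_mul_setIntegral_swap {α β : Type*} [MeasurableSpace α] [MeasurableSpace β]
    {μ : Measure α} {ν : Measure β} [SFinite μ] [SFinite ν] {S : Set (α × β)}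
    (hS : MeasurableSet S) {f : α → ℝ} {g : β → ℝ} (hf : Integrable f μ) (hg : Integrable g ν) :
    ∫ x, f x * ∫ y in {y | (x, y) ∈ S}, g y ∂ν ∂μ =
      ∫ y, g y * ∫ x in {x | (x, y) ∈ S}, f x ∂μ ∂ν := by
  have hF : Integrable (S.indicator fun p => f p.1 * g p.2) (μ.prod ν) :=
    (hf.mul_prod hg).indicator hS
  calc ∫ x, f x * ∫ y in {y | (x, y) ∈ S}, g y ∂ν ∂μ
      = ∫ x, ∫ y, S.indicator (fun p => f p.1 * g p.2) (x, y) ∂ν ∂μ := by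
        congr 1 with x
        rw [← integral_const_mul]
        exact (integral_indicator (measurable_prodMk_left hS)).symm
    _ = ∫ y, ∫ x, S.indicator (fun p => f p.1 * g p.2) (x, y) ∂μ ∂ν :=
        integral_integral_swap hF
    _ = ∫ y, g y * ∫ x in {x | (x, y) ∈ S}, f x ∂μ ∂ν := by
        congr 1 with y
        rw [← integral_const_mul]
        simp only [mul_comm (g y)]
        exact integral_indicator (measurable_prodMk_right hS)

lemma setOf_lt_mul_sq_inter_Ioi_eq_Ioi_sqrt {c t : ℝ} (ht : 0 < t) :
    {u | c < t * u ^ 2} ∩ Ioi 0 = Ioi √(c / t) := by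
  ext u
  simp only [mem_inter_iff, mem_ofPred_eq, mem_Ioi]
  constructor
  · rintro ⟨h, hu⟩
    rw [sqrt_lt' hu, div_lt_iff₀ ht]
    linarith
  · intro h
    have hu : 0 < u := (sqrt_nonneg _).trans_lt h
    rw [sqrt_lt' hu, div_lt_iff₀ ht] at h
    exact ⟨by linarith, hu⟩

lemma setOf_lt_mul_sq_inter_Ioi_eq_Ioi_div {c u : ℝ} (hc : 0 ≤ c) (hu : 0 < u) :
    {t | c < t * u ^ 2} ∩ Ioi 0 = Ioi (c / u ^ 2) := by
  ext t
  simp only [mem_inter_iff, mem_ofPred_eq, mem_Ioi, div_lt_iff₀ (pow_pos hu 2)]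
  exact ⟨And.left, fun h => ⟨h, pos_of_mul_pos_left (hc.trans_lt h) (by positivity)⟩⟩

theorem laplace_transform_erfc (c : ℝ) (hc : 0 < c) :
    ∀ s : ℝ, 0 < s →
      (∫ t in Set.Ioi (0 : ℝ), Real.exp (-s * t) * erfc (Real.sqrt (c / t))) =
        Real.exp (-2 * Real.sqrt (c * s)) / s := by
  intro s hs
  have hswap := integral_mul_setIntegral_swap (S := {p : ℝ × ℝ | c < p.1 * p.2 ^ 2})
    (measurableSet_lt measurable_const (by fun_prop)) (exp_neg_integrableOn_Ioi 0 hs)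
    (by simpa using (integrable_exp_neg_mul_sq one_pos).integrableOn :
      IntegrableOn (fun u => exp (-u ^ 2)) (Ioi 0))
  simp only [mem_ofPred_eq, Measure.restrict_restrict' measurableSet_Ioi] at hswap
  calc ∫ t in Ioi 0, exp (-s * t) * erfc √(c / t)
      = ∫ t in Ioi 0, 2 / √π * (exp (-s * t) *
          ∫ u in {u | c < t * u ^ 2} ∩ Ioi 0, exp (-u ^ 2)) := by
        refine setIntegral_congr_fun measurableSet_Ioi fun t (ht : 0 < t) => ?_
        rw [setOf_lt_mul_sq_inter_Ioi_eq_Ioi_sqrt ht, erfc]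
        ring
    _ = 2 / √π * ∫ u in Ioi 0, s⁻¹ * exp (-u ^ 2 - c * s / u ^ 2) := by
        rw [integral_const_mul, hswap]
        congr 1
        refine setIntegral_congr_fun measurableSet_Ioi fun u (hu : 0 < u) => ?_
        rw [setOf_lt_mul_sq_inter_Ioi_eq_Ioi_div hc.le hu, integral_exp_mul_Ioi (by linarith),
          neg_div_neg_eq, show -u ^ 2 - c * s / u ^ 2 = -u ^ 2 + -s * (c / u ^ 2) by ring,
          exp_add]
        ring
    _ = exp (-2 * √(c * s)) / s := by
        rw [integral_const_mul, integral_Ioi_exp_neg_sq_sub_div_sq (mul_pos hc hs)]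
        field_simp
end

section
/- For uniform resetting on [0, 2/r] and diffusive first passage F_τ(t) = erfc(√(L²/(4Dt))), the success probability equals p = ∫₀^{2/r} erfc(√(L²/(4Dt))) (r/2) dt = (1 + rL²/(4D)) erfc(√(rL²/(8D))) − √(rL²/(2πD)) e^{−rL²/(8D)}. -/
open MeasureTheory Real

/-!
With `a = L²/(4D)` the integrand is `erfc √(a/t)`, which has the explicit primitive
`G(t) = (t + 2a) erfc √(a/t) - (2/√π) √(a t) e^{-a/t}` on `(0, ∞)`: in `G'` the Gaussian term
coming from `erfc'` cancels the derivative of `√(a t) e^{-a/t}`. Since `erfc √(a/t) → 0` as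
`t → 0⁺`, also `G(t) → 0`, so the integral over `(0, 2/r]` is `G(2/r)`.
-/

open Filter Topology Set

lemma integrableOn_exp_neg_sq_Ioi (z : ℝ) : IntegrableOn (fun u : ℝ => exp (-u ^ 2)) (Ioi z) := by
  simpa using (integrable_exp_neg_mul_sq one_pos).integrableOn (s := Ioi z)

lemma integral_exp_neg_sq_Ioi_zero : ∫ u in Ioi (0 : ℝ), exp (-u ^ 2) = √π / 2 := by
  simpa using integral_gaussian_Ioi 1

lemma erfc_eq_one_sub (z : ℝ) : erfc z = 1 - 2 / √π * ∫ u in (0 : ℝ)..z, exp (-u ^ 2) := by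
  rw [← intervalIntegral.integral_Ioi_sub_Ioi' (integrableOn_exp_neg_sq_Ioi 0)
    (integrableOn_exp_neg_sq_Ioi z), integral_exp_neg_sq_Ioi_zero, erfc]
  field_simp
  ring

lemma hasDerivAt_erfc (z : ℝ) : HasDerivAt erfc (-(2 / √π) * exp (-z ^ 2)) z := by
  have hcont : Continuous fun u : ℝ => exp (-u ^ 2) := by fun_prop
  have h := intervalIntegral.integral_hasDerivAt_right (hcont.intervalIntegrable 0 z)
    (hcont.stronglyMeasurableAtFilter _ _) hcont.continuousAt
  rw [funext erfc_eq_one_sub]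
  simpa using (h.const_mul (2 / √π)).const_sub 1

lemma continuous_erfc : Continuous erfc :=
  continuous_iff_continuousAt.2 fun z => (hasDerivAt_erfc z).continuousAt

lemma erfc_nonneg (z : ℝ) : 0 ≤ erfc z :=
  mul_nonneg (by positivity) (setIntegral_nonneg measurableSet_Ioi fun u _ => (exp_pos _).le)

lemma erfc_le_one {z : ℝ} (hz : 0 ≤ z) : erfc z ≤ 1 := by
  rw [erfc_eq_one_sub, sub_le_self_iff]
  exact mul_nonneg (by positivity) (intervalIntegral.integral_nonneg hz fun u _ => (exp_pos _).le)

lemma tendsto_erfc_atTop : Tendsto erfc atTop (𝓝 0) := by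
  have h := intervalIntegral_tendsto_integral_Ioi 0 (integrableOn_exp_neg_sq_Ioi 0) tendsto_id
  rw [integral_exp_neg_sq_Ioi_zero] at h
  simp only [id] at h
  rw [funext erfc_eq_one_sub]
  convert (h.const_mul (2 / √π)).const_sub 1 using 2
  field_simp
  ring

lemma integrableOn_erfc_sqrt_div (a T : ℝ) : IntegrableOn (fun t => erfc √(a / t)) (Ioc 0 T) := by
  refine Measure.integrableOn_of_bounded (M := 1) measure_Ioc_lt_top.ne
    (continuous_erfc.measurable.comp (by fun_prop)).aestronglyMeasurable ?_
  refine (ae_restrict_iff' measurableSet_Ioc).2 (Eventually.of_forall fun t _ => ?_)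
  rw [norm_of_nonneg (erfc_nonneg _)]
  exact erfc_le_one (sqrt_nonneg _)

noncomputable def erfcSqrtDivPrimitive (a t : ℝ) : ℝ :=
  (t + 2 * a) * erfc √(a / t) - 2 / √π * √(a * t) * exp (-(a / t))

lemma hasDerivAt_erfcSqrtDivPrimitive {a t : ℝ} (ha : 0 < a) (ht : 0 < t) :
    HasDerivAt (erfcSqrtDivPrimitive a) (erfc √(a / t)) t := by
  have hquot : HasDerivAt (fun x => a / x) (-a / t ^ 2) t :=
    ((hasDerivAt_const t a).div (hasDerivAt_id' t) ht.ne').congr_deriv (by ring)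
  have hsqrt := hquot.sqrt (by positivity)
  have hprod : HasDerivAt (fun x => a * x) a t := by simpa using (hasDerivAt_id t).const_mul a
  have h := (((hasDerivAt_id t).add_const (2 * a)).mul ((hasDerivAt_erfc _).comp t hsqrt)).sub
    (((hprod.sqrt (by positivity)).const_mul (2 / √π)).mul hquot.neg.exp)
  refine h.congr_deriv ?_
  obtain ⟨s, hs, rfl⟩ : ∃ s, 0 < s ∧ s ^ 2 = t := ⟨√t, sqrt_pos.2 ht, sq_sqrt ht.le⟩
  obtain ⟨b, hb, rfl⟩ : ∃ b, 0 < b ∧ b ^ 2 = a := ⟨√a, sqrt_pos.2 ha, sq_sqrt ha.le⟩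
  have h1 : √(b ^ 2 / s ^ 2) = b / s := by rw [← div_pow, sqrt_sq (by positivity)]
  have h2 : √(b ^ 2 * s ^ 2) = b * s := by rw [← mul_pow, sqrt_sq (by positivity)]
  simp only [Function.comp_apply, id, Pi.neg_apply, h1, h2, div_pow]
  field_simp
  ring

lemma tendsto_erfcSqrtDivPrimitive_zero {a : ℝ} (ha : 0 < a) :
    Tendsto (erfcSqrtDivPrimitive a) (𝓝[>] 0) (𝓝 0) := by
  have hquot : Tendsto (fun t => a / t) (𝓝[>] 0) atTop := by
    simpa only [div_eq_mul_inv] using tendsto_inv_nhdsGT_zero.const_mul_atTop ha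
  have herfc := tendsto_erfc_atTop.comp (tendsto_sqrt_atTop.comp hquot)
  have hexp := tendsto_exp_neg_atTop_nhds_zero.comp hquot
  have hlin : Tendsto (fun t => t + 2 * a) (𝓝[>] 0) (𝓝 (0 + 2 * a)) :=
    tendsto_nhdsWithin_of_tendsto_nhds ((continuous_add_const _).tendsto 0)
  have hroot : Tendsto (fun t => 2 / √π * √(a * t)) (𝓝[>] 0) (𝓝 (2 / √π * √(a * 0))) := by
    apply tendsto_nhdsWithin_of_tendsto_nhds
    exact (Continuous.tendsto (by fun_prop) 0)
  unfold erfcSqrtDivPrimitive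
  simpa using (hlin.mul herfc).sub (hroot.mul hexp)

theorem integral_erfc_sqrt_div {a T : ℝ} (ha : 0 < a) (hT : 0 < T) :
    ∫ t in Ioc 0 T, erfc √(a / t) = erfcSqrtDivPrimitive a T := by
  rw [← intervalIntegral.integral_of_le hT.le,
    intervalIntegral.integral_eq_sub_of_hasDerivAt_of_tendsto hT
      (fun t ht => hasDerivAt_erfcSqrtDivPrimitive ha ht.1)
      ((intervalIntegrable_iff_integrableOn_Ioc_of_le hT.le).2 (integrableOn_erfc_sqrt_div a T))
      (tendsto_erfcSqrtDivPrimitive_zero ha)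
      (hasDerivAt_erfcSqrtDivPrimitive ha hT).continuousAt.continuousWithinAt,
    sub_zero]

theorem uniform_reset_success_prob (L D r : ℝ) (hL : 0 < L) (hD : 0 < D) (hr : 0 < r) :
    (∫ t in Set.Ioc (0 : ℝ) (2 / r),
        erfc (Real.sqrt (L ^ 2 / (4 * D * t))) * (r / 2)) =
      (1 + r * L ^ 2 / (4 * D)) * erfc (Real.sqrt (r * L ^ 2 / (8 * D))) -
        Real.sqrt (r * L ^ 2 / (2 * π * D)) * Real.exp (-r * L ^ 2 / (8 * D)) := by
  simp_rw [← div_div (L ^ 2) (4 * D)]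
  rw [integral_mul_const, integral_erfc_sqrt_div (by positivity) (by positivity),
    erfcSqrtDivPrimitive]
  have hx : L ^ 2 / (4 * D) / (2 / r) = r * L ^ 2 / (8 * D) := by field_simp; ring
  have hroot : 2 / √π * √(L ^ 2 / (4 * D) * (2 / r)) * (r / 2) = √(r * L ^ 2 / (2 * π * D)) := by
    rw [eq_comm, sqrt_eq_iff_eq_sq (by positivity) (by positivity), mul_pow, mul_pow, div_pow,
      sq_sqrt pi_pos.le, sq_sqrt (by positivity)]
    field_simp
    ring
  rw [hx, ← hroot, neg_mul, neg_div]
  field_simp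
end
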